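/- Define $\mathcal{L}_{\sigma,M}(\nu) = \mathbb{E}\left\|X - \overline{Y} + (\sigma^2/M)\,\nu(\overline{Y})\right\|^2$ where $Y_m = X + \mathcal{N}(0,\sigma^2 I_d)$ i.i.d. Then for any measurable $\nu: \mathbb{R}^d \to \mathbb{R}^d$ and any two pairs $(\sigma, M)$, $(\sigma', M')$ with $\sigma/\sqrt{M} = \sigma'/\sqrt{M'}$, one has $\mathcal{L}_{\sigma,M}(\nu) = \mathcal{L}_{\sigma',M'}(\nu)$. -/

import Mathlib

open MeasureTheory Finset

/-- Isotropic Gaussian density `N(z; 0, σ² I_d)` on `ℝ^d`. -/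
noncomputable def gaussPdf (d : ℕ) (σ : ℝ) (z : EuclideanSpace ℝ (Fin d)) : ℝ :=
  (2 * Real.pi * σ ^ 2) ^ (-(d : ℝ) / 2) * Real.exp (-‖z‖ ^ 2 / (2 * σ ^ 2))

/-- The GPS learning objective
`L_{σ,M}(ν) = E ‖X - Ȳ + (σ²/M) ν(Ȳ)‖²` where `Y m = X + N(0, σ² I_d)` i.i.d.
and `Ȳ` is the empirical mean of the measurements; written with the Gaussian noise
`γ = y - x` integrated against its density. -/
noncomputable def gpsLoss (d : ℕ) (σ : ℝ) (M : ℕ)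
    (p : EuclideanSpace ℝ (Fin d) → ℝ)
    (ν : EuclideanSpace ℝ (Fin d) → EuclideanSpace ℝ (Fin d)) : ℝ :=
  ∫ x, p x *
    ∫ γ : Fin M → EuclideanSpace ℝ (Fin d),
      (∏ m, gaussPdf d σ (γ m)) *
        ‖x - (x + (M : ℝ)⁻¹ • ∑ m, γ m)
          + (σ ^ 2 / M) • ν (x + (M : ℝ)⁻¹ • ∑ m, γ m)‖ ^ 2
      ∂(Measure.pi fun _ => volume)

/-! The mean of `M` independent `N(0, σ² I_d)` vectors is `N(0, (σ/√M)² I_d)`, as one sees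
by comparing characteristic functions. Since also `σ²/M = (σ/√M)²`, the loss `L_{σ,M}` is a
function of `σ/√M` alone. -/

section

variable {d : ℕ} {σ : ℝ}

lemma gaussPdf_nonneg (z : EuclideanSpace ℝ (Fin d)) : 0 ≤ gaussPdf d σ z := by
  unfold gaussPdf; positivity

lemma gaussPdf_eq_const_mul_exp : gaussPdf d σ = fun z =>
    (2 * Real.pi * σ ^ 2) ^ (-(d : ℝ) / 2) * Real.exp (-(2 * σ ^ 2)⁻¹ * ‖z‖ ^ 2) := by
  ext z
  rw [gaussPdf]
  congr 2
  ring

@[fun_prop]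
lemma measurable_gaussPdf : Measurable (gaussPdf d σ) := by
  unfold gaussPdf; fun_prop

lemma integrable_gaussPdf (hσ : σ ≠ 0) : Integrable (gaussPdf d σ) := by
  rw [gaussPdf_eq_const_mul_exp]
  refine Integrable.const_mul (Integrable.of_integral_ne_zero ?_) _
  rw [GaussianFourier.integral_rexp_neg_mul_sq_norm (by positivity)]
  positivity

lemma integral_gaussPdf_mul_cexp_inner (hσ : σ ≠ 0) (t : EuclideanSpace ℝ (Fin d)) :
    ∫ z, (gaussPdf d σ z : ℂ) * Complex.exp (inner ℝ z t * Complex.I)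
      = Complex.exp (-(σ ^ 2 * ‖t‖ ^ 2 / 2)) := by
  have hpos : 0 < 2 * Real.pi * σ ^ 2 := by positivity
  have hb : 0 < ((2 * σ ^ 2 : ℝ)⁻¹ : ℂ).re := by norm_cast; positivity
  have hpt : ∀ z, (gaussPdf d σ z : ℂ) * Complex.exp (inner ℝ z t * Complex.I)
      = ((2 * Real.pi * σ ^ 2) ^ (-(d : ℝ) / 2) : ℝ) * Complex.exp
          (-((2 * σ ^ 2 : ℝ)⁻¹ : ℂ) * (‖z‖ : ℂ) ^ 2 + Complex.I * (inner ℝ t z : ℝ)) := by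
    intro z
    rw [gaussPdf, Complex.ofReal_mul, Complex.ofReal_exp, mul_assoc, ← Complex.exp_add,
      real_inner_comm]
    push_cast
    ring_nf
  have hπ : (Real.pi : ℂ) / ((2 * σ ^ 2 : ℝ)⁻¹ : ℂ) = (2 * Real.pi * σ ^ 2 : ℝ) := by
    push_cast; field_simp
  simp only [hpt, integral_const_mul, GaussianFourier.integral_cexp_neg_mul_sq_norm_add hb,
    finrank_euclideanSpace_fin, hπ, Complex.I_sq]
  rw [← Complex.ofReal_natCast, ← Complex.ofReal_ofNat, ← Complex.ofReal_div,
    ← Complex.ofReal_cpow hpos.le, ← mul_assoc, ← Complex.ofReal_mul, neg_div,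
    Real.rpow_neg hpos.le, inv_mul_cancel₀ (by positivity), Complex.ofReal_one, one_mul]
  congr 1
  push_cast
  field_simp
  ring

lemma charFun_withDensity_gaussPdf (hσ : σ ≠ 0) (t : EuclideanSpace ℝ (Fin d)) :
    charFun (volume.withDensity fun z => ENNReal.ofReal (gaussPdf d σ z)) t
      = Complex.exp (-(σ ^ 2 * ‖t‖ ^ 2 / 2)) := by
  rw [charFun_apply, integral_withDensity_eq_integral_toReal_smul
    (by fun_prop) (by simp)]
  simp only [ENNReal.toReal_ofReal (gaussPdf_nonneg _), Complex.real_smul]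
  exact integral_gaussPdf_mul_cexp_inner hσ t

lemma map_mean_withDensity_prod_gaussPdf (hσ : σ ≠ 0) {M : ℕ} (hM : M ≠ 0) :
    ((volume : Measure (Fin M → EuclideanSpace ℝ (Fin d))).withDensity
        fun γ => ENNReal.ofReal (∏ m, gaussPdf d σ (γ m))).map
          (fun γ => (M : ℝ)⁻¹ • ∑ m, γ m)
      = volume.withDensity fun z => ENNReal.ofReal (gaussPdf d (σ / √M) z) := by
  have hint :
      Integrable (fun γ : Fin M → EuclideanSpace ℝ (Fin d) => ∏ m, gaussPdf d σ (γ m)) :=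
    volume_pi (α := fun _ : Fin M => EuclideanSpace ℝ (Fin d)) ▸
      Integrable.fintype_prod fun _ => integrable_gaussPdf hσ
  have := isFiniteMeasure_withDensity_ofReal hint.2
  have hσM : σ / √M ≠ 0 := div_ne_zero hσ (by positivity)
  have : IsFiniteMeasure (volume.withDensity fun z => ENNReal.ofReal (gaussPdf d (σ / √M) z)) :=
    isFiniteMeasure_withDensity_ofReal (integrable_gaussPdf hσM).2
  refine Measure.ext_of_charFun (funext fun t => ?_)
  rw [charFun_withDensity_gaussPdf hσM, charFun_apply,
    integral_map (by fun_prop) (by fun_prop),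
    integral_withDensity_eq_integral_toReal_smul (by fun_prop) (by simp)]
  have hpt : ∀ γ : Fin M → EuclideanSpace ℝ (Fin d),
      (ENNReal.ofReal (∏ m, gaussPdf d σ (γ m))).toReal
          • Complex.exp (inner ℝ ((M : ℝ)⁻¹ • ∑ m, γ m) t * Complex.I)
        = ∏ m, (gaussPdf d σ (γ m) : ℂ) *
            Complex.exp (inner ℝ (γ m) ((M : ℝ)⁻¹ • t) * Complex.I) := by
    intro γ
    rw [ENNReal.toReal_ofReal (prod_nonneg fun m _ => gaussPdf_nonneg _), Complex.real_smul,
      prod_mul_distrib, Complex.ofReal_prod, ← Complex.exp_sum]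
    simp only [real_inner_smul_left, real_inner_smul_right, sum_inner, Finset.mul_sum,
      Complex.ofReal_sum, Finset.sum_mul]
  simp only [hpt, volume_pi, integral_fintype_prod_eq_prod (𝕜 := ℂ)
    (fun _ z => (gaussPdf d σ z : ℂ) * Complex.exp (inner ℝ z ((M : ℝ)⁻¹ • t) * Complex.I)),
    integral_gaussPdf_mul_cexp_inner hσ, prod_const, card_univ, Fintype.card_fin,
    ← Complex.exp_nat_mul]
  congr 1
  have hvar : ((σ / √M : ℝ) : ℂ) ^ 2 = σ ^ 2 / M := by
    rw [← Complex.ofReal_pow, div_pow, Real.sq_sqrt (Nat.cast_nonneg M)]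
    push_cast; rfl
  rw [hvar, norm_smul, norm_inv, Real.norm_natCast]
  push_cast
  field_simp

lemma integral_prod_gaussPdf_smul_comp_mean {F : Type*} [NormedAddCommGroup F]
    [NormedSpace ℝ F] (hσ : σ ≠ 0) {M : ℕ} (hM : M ≠ 0) {g : EuclideanSpace ℝ (Fin d) → F}
    (hg : StronglyMeasurable g) :
    ∫ γ : Fin M → EuclideanSpace ℝ (Fin d),
        (∏ m, gaussPdf d σ (γ m)) • g ((M : ℝ)⁻¹ • ∑ m, γ m) ∂(Measure.pi fun _ => volume)
      = ∫ z, gaussPdf d (σ / √M) z • g z := by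
  calc _ = ∫ γ, g ((M : ℝ)⁻¹ • ∑ m, γ m)
          ∂((volume : Measure (Fin M → EuclideanSpace ℝ (Fin d))).withDensity
            fun γ => ENNReal.ofReal (∏ m, gaussPdf d σ (γ m))) := by
        rw [integral_withDensity_eq_integral_toReal_smul (by fun_prop) (by simp), volume_pi]
        simp only [ENNReal.toReal_ofReal (prod_nonneg fun m _ => gaussPdf_nonneg _)]
    _ = ∫ z, g z ∂(volume.withDensity fun z => ENNReal.ofReal (gaussPdf d (σ / √M) z)) := by
        rw [← map_mean_withDensity_prod_gaussPdf hσ hM, integral_map (by fun_prop)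
          hg.aestronglyMeasurable]
    _ = _ := by
        rw [integral_withDensity_eq_integral_toReal_smul (by fun_prop) (by simp)]
        simp only [ENNReal.toReal_ofReal (gaussPdf_nonneg _)]

lemma gpsLoss_eq_integral_gaussPdf (hσ : σ ≠ 0) {M : ℕ} (hM : M ≠ 0)
    (p : EuclideanSpace ℝ (Fin d) → ℝ)
    {ν : EuclideanSpace ℝ (Fin d) → EuclideanSpace ℝ (Fin d)} (hν : Measurable ν) :
    gpsLoss d σ M p ν = ∫ x, p x * ∫ z, gaussPdf d (σ / √M) z *
      ‖x - (x + z) + (σ / √M) ^ 2 • ν (x + z)‖ ^ 2 := by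
  have hvar : (σ / √M) ^ 2 = σ ^ 2 / M := by rw [div_pow, Real.sq_sqrt (Nat.cast_nonneg M)]
  refine integral_congr_ae (Filter.Eventually.of_forall fun x => congrArg (p x * ·) ?_)
  rw [hvar]
  exact integral_prod_gaussPdf_smul_comp_mean hσ hM
    (g := fun z => ‖x - (x + z) + (σ ^ 2 / M) • ν (x + z)‖ ^ 2)
    (Measurable.stronglyMeasurable (by fun_prop))

end

theorem gpsLoss_universal_general
    (d : ℕ) (σ σ' : ℝ) (M M' : ℕ)
    (hσ : 0 < σ) (hσ' : 0 < σ') (hM : 1 ≤ M) (hM' : 1 ≤ M')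
    (p : EuclideanSpace ℝ (Fin d) → ℝ)
    (ν : EuclideanSpace ℝ (Fin d) → EuclideanSpace ℝ (Fin d)) (hν : Measurable ν)
    (huniv : σ / Real.sqrt M = σ' / Real.sqrt M') :
    gpsLoss d σ M p ν = gpsLoss d σ' M' p ν := by
  rw [gpsLoss_eq_integral_gaussPdf hσ.ne' (by omega) p hν,
    gpsLoss_eq_integral_gaussPdf hσ'.ne' (by omega) p hν, huniv]

/-- universality of the GPS parametrization: for any measurable `ν` and
any two models `(σ, M)`, `(σ', M')` in the same universality class
`σ/√M = σ'/√M'`, the losses coincide: `L_{σ,M}(ν) = L_{σ',M'}(ν)`. -/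
theorem gpsLoss_universal
    (d : ℕ) (σ σ' : ℝ) (M M' : ℕ)
    (hσ : 0 < σ) (hσ' : 0 < σ') (hM : 1 ≤ M) (hM' : 1 ≤ M')
    (p : EuclideanSpace ℝ (Fin d) → ℝ) (hp_meas : Measurable p)
    (hp_nonneg : ∀ x, 0 ≤ p x) (hp_int : ∫ x, p x = 1)
    (ν : EuclideanSpace ℝ (Fin d) → EuclideanSpace ℝ (Fin d)) (hν : Measurable ν)
    (huniv : σ / Real.sqrt M = σ' / Real.sqrt M') :
    gpsLoss d σ M p ν = gpsLoss d σ' M' p ν :=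
  gpsLoss_universal_general d σ σ' M M' hσ hσ' hM hM' p ν hν huniv
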